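/- arXiv:2211.13846 — 2 statements merged into one kernel-verified Lean document; each statement's English description precedes it below -/
import Mathlib

section
/- Suppose along a hybrid solution the storage function U satisfies: U is nonincreasing at jumps, and during flow U(φ(t)) − U(φ(s)) ≤ −∫_s^t α(|φ(r)|_A) dr for a positive definite continuous α. If additionally the solution is complete and the average dwell-time bound j ≤ t/τ_a + 1 holds, then U(φ(t,j)) → 0 as t + j → ∞, provided U is bounded below by α̲(|φ|_A) with α̲ class-K∞. -/
/-!
If `u` stayed above some `ε > 0`, then `α̲⁻¹ ∘ u` would stay in a compact interval
`[α̲⁻¹ ε, α̲⁻¹ (u 0)]` away from `0`, on which `α` is bounded below by some `c > 0`; the decay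
inequality would then force `u t ≤ u 0 - c t`, which is negative for large `t`. Since `u` is
nonincreasing, dipping below every `ε` means converging to `0`.
-/

open Filter intervalIntegral

/-- A class-K∞ function on `[0,∞)`. -/
def IsKInf (f : ℝ → ℝ) : Prop :=
  f 0 = 0 ∧ ContinuousOn f (Set.Ici 0) ∧ StrictMonoOn f (Set.Ici 0) ∧
    (∀ x ∈ Set.Ici (0:ℝ), 0 ≤ f x) ∧ (∀ M : ℝ, ∃ x ∈ Set.Ici (0:ℝ), M ≤ f x)

open Set MeasureTheory

namespace IsKInf

variable {f g : ℝ → ℝ}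

theorem surjOn (hf : IsKInf f) : SurjOn f (Ici 0) (Ici 0) := by
  obtain ⟨hf0, hfc, -, -, hfunbdd⟩ := hf
  intro x hx
  obtain ⟨z, hz, hxz⟩ := hfunbdd x
  have hIVT : Icc (f 0) (f z) ⊆ f '' Icc 0 z :=
    intermediate_value_Icc (mem_Ici.mp hz) (hfc.mono Icc_subset_Ici_self)
  obtain ⟨y, hy, rfl⟩ := hIVT ⟨hf0.symm ▸ hx, hxz⟩
  exact ⟨y, hy.1, rfl⟩

theorem mapsTo_of_leftInvOn (hf : IsKInf f) (hgf : LeftInvOn g f (Ici 0)) :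
    MapsTo g (Ici 0) (Ici 0) :=
  hgf.mapsTo hf.surjOn

theorem monotoneOn_of_invOn (hf : IsKInf f) (hgf : LeftInvOn g f (Ici 0))
    (hfg : RightInvOn g f (Ici 0)) : MonotoneOn g (Ici 0) := by
  intro a ha b hb hab
  have hg := hf.mapsTo_of_leftInvOn hgf
  rwa [← hf.2.2.1.le_iff_le (hg ha) (hg hb), hfg ha, hfg hb]

theorem pos_of_rightInvOn (hf : IsKInf f) (hfg : RightInvOn g f (Ici 0)) {x : ℝ}
    (hx : 0 < x) (hgx : 0 ≤ g x) : 0 < g x := by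
  refine hgx.lt_of_ne fun h => hx.ne ?_
  rw [← hfg hx.le, ← h, hf.1]

end IsKInf

theorem IntervalIntegrable.comp_antitoneOn {φ v : ℝ → ℝ} {a b : ℝ} (hφ : Continuous φ)
    (hv : AntitoneOn v (uIcc a b)) : IntervalIntegrable (fun r => φ (v r)) volume a b := by
  refine IntegrableOn.intervalIntegrable ?_
  have hrange : MapsTo v (uIcc a b) (Icc (v (max a b)) (v (min a b))) := fun r hr =>
    ⟨hv hr ⟨inf_le_sup, le_rfl⟩ hr.2, hv ⟨le_rfl, inf_le_sup⟩ hr hr.1⟩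
  obtain ⟨C, hC⟩ := isCompact_Icc.exists_bound_of_continuousOn hφ.continuousOn
    (s := Icc (v (max a b)) (v (min a b)))
  refine IntegrableOn.of_bound isCompact_uIcc.measure_lt_top ?_ C ?_
  · exact (hφ.measurable.comp_aemeasurable
      (aemeasurable_restrict_of_antitoneOn measurableSet_uIcc hv)).aestronglyMeasurable
  · exact (ae_restrict_iff' measurableSet_uIcc).mpr (ae_of_all _ fun r hr => hC _ (hrange hr))

theorem mul_sub_le_of_sub_le_neg_integral {u w : ℝ → ℝ} {c s t : ℝ} (hst : s ≤ t)
    (hut : 0 ≤ u t) (hw : IntervalIntegrable w volume s t) (hc : ∀ r ∈ Icc s t, c ≤ w r)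
    (hdecay : u t - u s ≤ -∫ r in s..t, w r) : c * (t - s) ≤ u s :=
  calc c * (t - s) = ∫ _ in s..t, c := by simp [mul_comm]
    _ ≤ ∫ r in s..t, w r := integral_mono_on hst intervalIntegrable_const hw hc
    _ ≤ u s := by linarith

theorem tendsto_zero_of_antitoneOn_of_exists_lt {u : ℝ → ℝ} (hu0 : ∀ t, 0 ≤ t → 0 ≤ u t)
    (hmono : AntitoneOn u (Ici 0)) (h : ∀ ε > 0, ∃ T ≥ 0, u T < ε) :
    Tendsto u atTop (nhds 0) := by
  refine tendsto_order.2 ⟨fun a ha => ?_, fun ε hε => ?_⟩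
  · filter_upwards [eventually_ge_atTop 0] with t ht using ha.trans_le (hu0 t ht)
  · obtain ⟨T, hT, hTε⟩ := h ε hε
    filter_upwards [eventually_ge_atTop T] with t ht
    exact (hmono hT (hT.trans ht) ht).trans_lt hTε

theorem storage_tendsto_zero_general (u α αl αlInv : ℝ → ℝ)
    (hu0 : ∀ t : ℝ, 0 ≤ t → 0 ≤ u t)
    (hmono : AntitoneOn u (Set.Ici 0))
    (hα : Continuous α) (hαpos : ∀ r : ℝ, 0 < r → 0 < α r)
    (hαl : IsKInf αl)
    (hInv₁ : ∀ x ∈ Set.Ici (0:ℝ), αlInv (αl x) = x)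
    (hInv₂ : ∀ x ∈ Set.Ici (0:ℝ), αl (αlInv x) = x)
    (hdecay : ∀ s t : ℝ, 0 ≤ s → s ≤ t →
      u t - u s ≤ -∫ r in s..t, α (αlInv (u r))) :
    Tendsto u atTop (nhds 0) := by
  have hleft : LeftInvOn αlInv αl (Ici 0) := fun x hx => hInv₁ x hx
  have hright : RightInvOn αlInv αl (Ici 0) := fun x hx => hInv₂ x hx
  have hinv := hαl.monotoneOn_of_invOn hleft hright
  have hv : AntitoneOn (fun r => αlInv (u r)) (Ici 0) := fun r hr s hs hrs =>
    hinv (hu0 s hs) (hu0 r hr) (hmono hr hs hrs)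
  refine tendsto_zero_of_antitoneOn_of_exists_lt hu0 hmono fun ε hε => ?_
  by_contra! hεu
  have hδ : 0 < αlInv ε := hαl.pos_of_rightInvOn hright hε (hαl.mapsTo_of_leftInvOn hleft hε.le)
  obtain ⟨c, hc, hαc⟩ := isCompact_Icc.exists_forall_le' hα.continuousOn
    (s := Icc (αlInv ε) (αlInv (u 0))) fun x hx => hαpos x (hδ.trans_le hx.1)
  set t := u 0 / c + 1
  have ht : 0 ≤ t := by have := hu0 0 le_rfl; positivity
  have hrate : ∀ r ∈ Icc 0 t, c ≤ α (αlInv (u r)) := fun r hr =>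
    hαc _ ⟨hinv hε.le (hu0 r hr.1) (hεu r hr.1), hv self_mem_Ici hr.1 hr.1⟩
  have hint : IntervalIntegrable (fun r => α (αlInv (u r))) volume 0 t :=
    .comp_antitoneOn hα (hv.mono (by rw [uIcc_of_le ht]; exact Icc_subset_Ici_self))
  have hbound := mul_sub_le_of_sub_le_neg_integral ht (hu0 t ht) hint hrate (hdecay 0 t le_rfl ht)
  have hct : c * t = u 0 + c := by simp only [t]; field_simp
  linarith

/-- Scalar storage-function convergence: a nonnegative nonincreasing `u` satisfying
`u(t) − u(s) ≤ −∫_s^t α(α̲⁻¹(u(r))) dr` with `α` continuous positive definite and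
`α̲` class-K∞ (with inverse `α̲⁻¹`) tends to `0` at infinity. -/
theorem storage_tendsto_zero (u α αl αlInv : ℝ → ℝ)
    (hu0 : ∀ t : ℝ, 0 ≤ t → 0 ≤ u t)
    (hmono : AntitoneOn u (Set.Ici 0))
    (hα : Continuous α) (hα0 : α 0 = 0) (hαpos : ∀ r : ℝ, 0 < r → 0 < α r)
    (hαl : IsKInf αl)
    (hInv₁ : ∀ x ∈ Set.Ici (0:ℝ), αlInv (αl x) = x)
    (hInv₂ : ∀ x ∈ Set.Ici (0:ℝ), αl (αlInv x) = x)
    (hdecay : ∀ s t : ℝ, 0 ≤ s → s ≤ t →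
      u t - u s ≤ -∫ r in s..t, α (αlInv (u r))) :
    Tendsto u atTop (nhds 0) :=
  storage_tendsto_zero_general u α αl αlInv hu0 hmono hα hαpos hαl hInv₁ hInv₂ hdecay
end

section
/- Let u : ℝ_{≥0} → ℝ_{≥0} be nonincreasing with u(t) − u(s) ≤ −∫_s^t β(u(r)) dr for all 0 ≤ s ≤ t, where β : ℝ_{≥0} → ℝ_{≥0} is continuous with β(r) > 0 for r > 0 and β(0) = 0. Then u(t) → 0 as t → ∞. -/
/-!
If `u` stayed above some `ε > 0`, then `u` would take values in the compact interval
`[ε, u 0]`, on which the continuous positive function `β` is bounded below by some `m > 0`.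
The decay inequality would then give `u t ≤ u 0 - m t`, which becomes negative for large `t`.
-/

open Filter intervalIntegral MeasureTheory Set

theorem AntitoneOn.intervalIntegrable_comp {u β : ℝ → ℝ} {a b : ℝ} (hab : a ≤ b)
    (hu : AntitoneOn u (Icc a b)) (hβ : Continuous β) :
    IntervalIntegrable (fun r => β (u r)) volume a b := by
  rw [intervalIntegrable_iff_integrableOn_Icc_of_le hab]
  obtain ⟨C, hC⟩ := isCompact_Icc.exists_bound_of_continuousOn (s := Icc (u b) (u a))
    hβ.continuousOn
  have hu_mem : ∀ r ∈ Icc a b, u r ∈ Icc (u b) (u a) := fun r hr =>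
    ⟨hu hr (right_mem_Icc.2 hab) hr.2, hu (left_mem_Icc.2 hab) hr hr.1⟩
  refine .of_bound measure_Icc_lt_top (hβ.measurable.comp_aemeasurable
    (aemeasurable_restrict_of_antitoneOn measurableSet_Icc hu)).aestronglyMeasurable C ?_
  filter_upwards [ae_restrict_mem measurableSet_Icc] with r hr
  exact hC _ (hu_mem r hr)

theorem le_sub_mul_of_le_sub_integral {u β : ℝ → ℝ} {m s t : ℝ} (hst : s ≤ t)
    (hu : AntitoneOn u (Icc s t)) (hβ : Continuous β) (hm : ∀ r ∈ Icc s t, m ≤ β (u r))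
    (hdecay : u t - u s ≤ -∫ r in s..t, β (u r)) :
    u t ≤ u s - m * (t - s) := by
  have hint : m * (t - s) ≤ ∫ r in s..t, β (u r) := by
    simpa [mul_comm] using
      integral_mono_on hst intervalIntegrable_const (hu.intervalIntegrable_comp hst hβ) hm
  linarith

theorem AntitoneOn.tendsto_atTop_zero {u : ℝ → ℝ} (hu0 : ∀ t, 0 ≤ t → 0 ≤ u t)
    (hmono : AntitoneOn u (Ici 0)) (hsmall : ∀ ε > 0, ∃ T ≥ 0, u T < ε) :
    Tendsto u atTop (nhds 0) := by
  refine Metric.tendsto_atTop.2 fun ε hε => ?_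
  obtain ⟨T, hT, huT⟩ := hsmall ε hε
  refine ⟨T, fun t ht => ?_⟩
  have ht0 : 0 ≤ t := hT.trans ht
  rw [Real.dist_0_eq_abs, abs_of_nonneg (hu0 t ht0)]
  exact (hmono hT ht0 ht).trans_lt huT

theorem comparison_tendsto_zero_general (u β : ℝ → ℝ)
    (hu0 : ∀ t : ℝ, 0 ≤ t → 0 ≤ u t)
    (hmono : AntitoneOn u (Set.Ici 0))
    (hβ : Continuous β) (hβpos : ∀ r : ℝ, 0 < r → 0 < β r)
    (hdecay : ∀ s t : ℝ, 0 ≤ s → s ≤ t → u t - u s ≤ -∫ r in s..t, β (u r)) :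
    Tendsto u atTop (nhds 0) := by
  refine hmono.tendsto_atTop_zero hu0 fun ε hε => ?_
  by_contra! hlarge
  obtain ⟨m, hm, hβm⟩ := isCompact_Icc.exists_forall_le' (s := Icc ε (u 0)) hβ.continuousOn
    fun x hx => hβpos x (hε.trans_le hx.1)
  have hlinear : ∀ t, 0 ≤ t → u t ≤ u 0 - m * t := fun t ht => by
    have hu : AntitoneOn u (Icc 0 t) := hmono.mono Icc_subset_Ici_self
    simpa using le_sub_mul_of_le_sub_integral ht hu hβ
      (fun r hr => hβm _ ⟨hlarge r hr.1, hu (left_mem_Icc.2 ht) hr hr.1⟩) (hdecay 0 t le_rfl ht)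
  have hT : 0 ≤ (u 0 + 1) / m := div_nonneg (by linarith [hu0 0 le_rfl]) hm.le
  have hT_bound := hlinear _ hT
  rw [mul_div_cancel₀ _ hm.ne'] at hT_bound
  linarith [hu0 _ hT]

/-- Comparison lemma: a nonnegative nonincreasing `u` with
`u(t) − u(s) ≤ −∫_s^t β(u(r)) dr` for continuous positive definite `β`
tends to `0` at infinity. -/
theorem comparison_tendsto_zero (u β : ℝ → ℝ)
    (hu0 : ∀ t : ℝ, 0 ≤ t → 0 ≤ u t)
    (hmono : AntitoneOn u (Set.Ici 0))
    (hβ : Continuous β) (hβ0 : β 0 = 0) (hβpos : ∀ r : ℝ, 0 < r → 0 < β r)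
    (hβnonneg : ∀ r : ℝ, 0 ≤ r → 0 ≤ β r)
    (hdecay : ∀ s t : ℝ, 0 ≤ s → s ≤ t → u t - u s ≤ -∫ r in s..t, β (u r)) :
    Tendsto u atTop (nhds 0) :=
  comparison_tendsto_zero_general u β hu0 hmono hβ hβpos hdecay
end
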